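/- arXiv:2512.24906 — 4 statements merged into one kernel-verified Lean document; each statement's English description precedes it below -/
import Mathlib

section
/- In the Gaussian setting, define M = ((Σ⁻¹)_X)⁻¹ Cᵀ c_Y and u(x, y) = −½ M ( (Σ⁻¹)_{YX} x + (Σ⁻¹)_Y y ) p_Σ(x, y). Then for every (x, y) ∈ ℝ^d × ℝ^m, div_x u(x, y) = −½ div_y( g(x, ·) )(y), where g(x, y) = c_Y C ( x − Σ_{XY} (Σ_Y)⁻¹ y ) p_Σ(x, y), div_x denotes the divergence in x of the ℝ^d-valued map x ↦ u(x, y), and div_y denotes the divergence in y of the ℝ^m-valued map y ↦ g(x, y). -/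
open Matrix MeasureTheory

noncomputable def gaussDensity {n : Type*} [Fintype n] [DecidableEq n]
    (S : Matrix n n ℝ) (w : n → ℝ) : ℝ :=
  (2 * Real.pi) ^ (-(Fintype.card n : ℝ) / 2) * S.det ^ (-(1 : ℝ) / 2) *
    Real.exp (-(1 / 2 : ℝ) * (w ⬝ᵥ (S⁻¹ *ᵥ w)))

/-! With `P = Σ⁻¹`, the density satisfies `∇p(z) = -p(z) P z`, so in either block of variables the
divergence of `p • (A w + b)` is `p * (tr A - (P z)_block ⬝ (A w + b))`. Both sides of the claim
are therefore `p` times a scalar, and the scalars agree by the block identity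
`(P_X)⁻¹ P_XY = -Σ_XY (Σ_Y)⁻¹`, read off from `P Σ = 1`. It gives
`(P_X)⁻¹ (P z)_X = x - Σ_XY (Σ_Y)⁻¹ y`, which matches the drift terms because
`Mᵀ = c_Y C (P_X)⁻¹`, and `tr (M P_YX) = -tr (c_Y C Σ_XY (Σ_Y)⁻¹)`, which matches the trace
terms. -/

section Calculus

variable {n : Type*} [Fintype n] [DecidableEq n]

theorem hasFDerivAt_dotProduct_mulVec_self (P : Matrix n n ℝ) (w : n → ℝ) :
    HasFDerivAt (fun v : n → ℝ => v ⬝ᵥ P *ᵥ v)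
      ((toLinearMap₂' ℝ (P + Pᵀ) : (n → ℝ) →ₗ[ℝ] (n → ℝ) →ₗ[ℝ] ℝ).toContinuousBilinearMap w) w := by
  set B := (toLinearMap₂' ℝ P : (n → ℝ) →ₗ[ℝ] (n → ℝ) →ₗ[ℝ] ℝ).toContinuousBilinearMap
  have hB : HasFDerivAt (fun v => B v v) _ w :=
    B.hasFDerivAt_of_bilinear (hasFDerivAt_id w) (hasFDerivAt_id w)
  rw [show (fun v => B v v) = fun v => v ⬝ᵥ P *ᵥ v from funext (toLinearMap₂'_apply' P · _)] at hB
  refine hB.congr_fderiv ?_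
  ext h
  simp only [ContinuousLinearMap.precompR_apply, ContinuousLinearMap.compL_apply,
    ContinuousLinearMap.comp_id, _root_.add_apply, LinearMap.toContinuousBilinearMap_apply,
    toLinearMap₂'_apply', ContinuousLinearMap.precompL_apply, ContinuousLinearMap.id_apply,
    map_add, LinearMap.add_apply, mulVec_transpose, add_right_inj, B]
  rw [dotProduct_mulVec, dotProduct_comm]

theorem hasFDerivAt_gaussDensity (S : Matrix n n ℝ) (w : n → ℝ) :
    HasFDerivAt (gaussDensity S) ((-(1 / 2 : ℝ) * gaussDensity S w) •
      (toLinearMap₂' ℝ (S⁻¹ + S⁻¹ᵀ) : (n → ℝ) →ₗ[ℝ] (n → ℝ) →ₗ[ℝ] ℝ).toContinuousBilinearMap w)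
      w := by
  have hq : HasFDerivAt (gaussDensity S) _ w :=
    (((hasFDerivAt_dotProduct_mulVec_self S⁻¹ w).const_mul (-(1 / 2 : ℝ))).exp).const_mul _
  refine hq.congr_fderiv ?_
  simp only [smul_smul, gaussDensity]
  ring_nf

theorem differentiable_gaussDensity (S : Matrix n n ℝ) : Differentiable ℝ (gaussDensity S) :=
  fun w => (hasFDerivAt_gaussDensity S w).differentiableAt

theorem fderiv_gaussDensity_apply {S : Matrix n n ℝ} (hS : S.IsSymm) (w h : n → ℝ) :
    fderiv ℝ (gaussDensity S) w h = -(gaussDensity S w) * ((S⁻¹ *ᵥ w) ⬝ᵥ h) := by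
  simp only [(hasFDerivAt_gaussDensity S w).fderiv, hS.inv.eq, _root_.smul_apply,
    LinearMap.toContinuousBilinearMap_apply, map_add, LinearMap.add_apply, toLinearMap₂'_apply',
    dotProduct_mulVec w, ← mulVec_transpose, smul_eq_mul]
  ring

end Calculus

section Divergence

variable {ι : Type*} [Fintype ι]

theorem hasFDerivAt_mulVec_add (A : Matrix ι ι ℝ) (b w : ι → ℝ) :
    HasFDerivAt (fun w => A *ᵥ w + b) (LinearMap.toContinuousLinearMap A.mulVecLin) w :=
  (LinearMap.toContinuousLinearMap A.mulVecLin).hasFDerivAt.add_const b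

variable [DecidableEq ι]

noncomputable def divergence (F : (ι → ℝ) → ι → ℝ) (w : ι → ℝ) : ℝ :=
  ∑ i, fderiv ℝ (fun w' => F w' i) w (Pi.single i 1)

theorem divergence_smul {ρ : (ι → ℝ) → ℝ} {F : (ι → ℝ) → ι → ℝ} {w : ι → ℝ}
    (hρ : DifferentiableAt ℝ ρ w) (hF : DifferentiableAt ℝ F w) :
    divergence (fun w => ρ w • F w) w = fderiv ℝ ρ w (F w) + ρ w * divergence F w := by
  have hρF : fderiv ℝ ρ w (F w) = ∑ i, F w i * fderiv ℝ ρ w (Pi.single i 1) := by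
    conv_lhs => rw [pi_eq_sum_univ' (F w)]
    simp only [map_sum, map_smul, smul_eq_mul]
  simp only [divergence, Pi.smul_apply, smul_eq_mul,
    fderiv_fun_mul hρ (differentiableAt_pi.1 hF _), _root_.add_apply, _root_.smul_apply,
    Finset.sum_add_distrib, Finset.mul_sum, hρF]
  ring

theorem divergence_mulVec_add (A : Matrix ι ι ℝ) (b w : ι → ℝ) :
    divergence (fun w => A *ᵥ w + b) w = A.trace := by
  have hi := hasFDerivAt_pi'.1 (hasFDerivAt_mulVec_add A b w)
  simp only [divergence, fun i => (hi i).fderiv]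
  simp [trace]

end Divergence

section PartialDerivatives

variable {α β : Type*}

theorem hasFDerivAt_sumElim_left [Fintype α] (x : α → ℝ) (y : β → ℝ) :
    HasFDerivAt (fun x' => Sum.elim x' y)
      (ContinuousLinearMap.pi (Sum.elim (ContinuousLinearMap.proj (R := ℝ) (φ := fun _ : α => ℝ))
        (0 : β → (α → ℝ) →L[ℝ] ℝ))) x := by
  rw [hasFDerivAt_pi']
  rintro (i | j)
  · exact hasFDerivAt_apply i x
  · exact hasFDerivAt_const _ _

theorem hasFDerivAt_sumElim_right [Fintype β] (x : α → ℝ) (y : β → ℝ) :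
    HasFDerivAt (fun y' => Sum.elim x y')
      (ContinuousLinearMap.pi (Sum.elim (0 : α → (β → ℝ) →L[ℝ] ℝ)
        (ContinuousLinearMap.proj (R := ℝ) (φ := fun _ : β => ℝ)))) y := by
  rw [hasFDerivAt_pi']
  rintro (i | j)
  · exact hasFDerivAt_const _ _
  · exact hasFDerivAt_apply j y

variable [Fintype α] [Fintype β] [DecidableEq α] [DecidableEq β] {S : Matrix (α ⊕ β) (α ⊕ β) ℝ}

theorem fderiv_gaussDensity_sumElim_left_apply (hS : S.IsSymm) (x h : α → ℝ) (y : β → ℝ) :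
    fderiv ℝ (fun x' => gaussDensity S (Sum.elim x' y)) x h =
      -gaussDensity S (Sum.elim x y) * ((S⁻¹.toBlocks₁₁ *ᵥ x + S⁻¹.toBlocks₁₂ *ᵥ y) ⬝ᵥ h) := by
  have hemb := hasFDerivAt_sumElim_left x y
  rw [fderiv_fun_comp x (differentiable_gaussDensity S _) hemb.differentiableAt,
    ContinuousLinearMap.comp_apply, hemb.fderiv, fderiv_gaussDensity_apply hS]
  conv_lhs => rw [← fromBlocks_toBlocks S⁻¹, fromBlocks_mulVec]
  simp [dotProduct, Fintype.sum_sum_type]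

theorem fderiv_gaussDensity_sumElim_right_apply (hS : S.IsSymm) (x : α → ℝ) (y h : β → ℝ) :
    fderiv ℝ (fun y' => gaussDensity S (Sum.elim x y')) y h =
      -gaussDensity S (Sum.elim x y) * ((S⁻¹.toBlocks₂₁ *ᵥ x + S⁻¹.toBlocks₂₂ *ᵥ y) ⬝ᵥ h) := by
  have hemb := hasFDerivAt_sumElim_right x y
  rw [fderiv_fun_comp y (differentiable_gaussDensity S _) hemb.differentiableAt,
    ContinuousLinearMap.comp_apply, hemb.fderiv, fderiv_gaussDensity_apply hS]
  conv_lhs => rw [← fromBlocks_toBlocks S⁻¹, fromBlocks_mulVec]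
  simp [dotProduct, Fintype.sum_sum_type]

theorem divergence_gaussDensity_sumElim_left_smul (hS : S.IsSymm) (A : Matrix α α ℝ)
    (b x : α → ℝ) (y : β → ℝ) :
    divergence (fun x' => gaussDensity S (Sum.elim x' y) • (A *ᵥ x' + b)) x =
      gaussDensity S (Sum.elim x y) *
        (A.trace - (S⁻¹.toBlocks₁₁ *ᵥ x + S⁻¹.toBlocks₁₂ *ᵥ y) ⬝ᵥ (A *ᵥ x + b)) := by
  rw [divergence_smul (DifferentiableAt.fun_comp' x (differentiable_gaussDensity S _)
      (hasFDerivAt_sumElim_left x y).differentiableAt)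
    (hasFDerivAt_mulVec_add A b x).differentiableAt,
    fderiv_gaussDensity_sumElim_left_apply hS, divergence_mulVec_add]
  ring

theorem divergence_gaussDensity_sumElim_right_smul (hS : S.IsSymm) (A : Matrix β β ℝ)
    (x : α → ℝ) (b y : β → ℝ) :
    divergence (fun y' => gaussDensity S (Sum.elim x y') • (A *ᵥ y' + b)) y =
      gaussDensity S (Sum.elim x y) *
        (A.trace - (S⁻¹.toBlocks₂₁ *ᵥ x + S⁻¹.toBlocks₂₂ *ᵥ y) ⬝ᵥ (A *ᵥ y + b)) := by
  rw [divergence_smul (DifferentiableAt.fun_comp' y (differentiable_gaussDensity S _)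
      (hasFDerivAt_sumElim_right x y).differentiableAt)
    (hasFDerivAt_mulVec_add A b y).differentiableAt,
    fderiv_gaussDensity_sumElim_right_apply hS, divergence_mulVec_add]
  ring

end PartialDerivatives

namespace Matrix

theorem toBlocks₁₂_mul {l m n o p q R : Type*} [Fintype n] [Fintype o]
    [NonUnitalNonAssocSemiring R] (A : Matrix (l ⊕ m) (n ⊕ o) R) (B : Matrix (n ⊕ o) (p ⊕ q) R) :
    (A * B).toBlocks₁₂ = A.toBlocks₁₁ * B.toBlocks₁₂ + A.toBlocks₁₂ * B.toBlocks₂₂ := by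
  conv_lhs => rw [← fromBlocks_toBlocks A, ← fromBlocks_toBlocks B, fromBlocks_multiply]
  rfl

variable {α β : Type*} [Fintype α] [Fintype β] [DecidableEq α] [DecidableEq β]
  {S : Matrix (α ⊕ β) (α ⊕ β) ℝ}

theorem inv_toBlocks₁₁_inv_mul_toBlocks₁₂_inv (hS : IsUnit S.det)
    (hE : IsUnit S⁻¹.toBlocks₁₁.det) (hY : IsUnit S.toBlocks₂₂.det) :
    S⁻¹.toBlocks₁₁⁻¹ * S⁻¹.toBlocks₁₂ = -(S.toBlocks₁₂ * S.toBlocks₂₂⁻¹) := by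
  have h12 : S⁻¹.toBlocks₁₁ * S.toBlocks₁₂ + S⁻¹.toBlocks₁₂ * S.toBlocks₂₂ = 0 := by
    rw [← toBlocks₁₂_mul, nonsing_inv_mul S hS]
    rfl
  calc S⁻¹.toBlocks₁₁⁻¹ * S⁻¹.toBlocks₁₂
      = S⁻¹.toBlocks₁₁⁻¹ * (S⁻¹.toBlocks₁₂ * S.toBlocks₂₂) * S.toBlocks₂₂⁻¹ := by
        rw [Matrix.mul_assoc, Matrix.mul_assoc, mul_nonsing_inv _ hY, Matrix.mul_one]
    _ = S⁻¹.toBlocks₁₁⁻¹ * -(S⁻¹.toBlocks₁₁ * S.toBlocks₁₂) * S.toBlocks₂₂⁻¹ := by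
        rw [eq_neg_of_add_eq_zero_right h12]
    _ = -(S.toBlocks₁₂ * S.toBlocks₂₂⁻¹) := by
        rw [Matrix.mul_neg, ← Matrix.mul_assoc, nonsing_inv_mul _ hE, Matrix.one_mul,
          Matrix.neg_mul]

theorem PosDef.inv_toBlocks₁₁_inv_mul_toBlocks₁₂_inv (hS : S.PosDef) :
    S⁻¹.toBlocks₁₁⁻¹ * S⁻¹.toBlocks₁₂ = -(S.toBlocks₁₂ * S.toBlocks₂₂⁻¹) :=
  Matrix.inv_toBlocks₁₁_inv_mul_toBlocks₁₂_inv hS.det_pos.ne'.isUnit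
    (hS.inv.submatrix Sum.inl_injective).det_pos.ne'.isUnit
    (hS.submatrix Sum.inr_injective).det_pos.ne'.isUnit

theorem PosDef.dotProduct_inv_toBlocks₁₁_inv_mul_mulVec (hS : S.PosDef) (N : Matrix α β ℝ)
    (x : α → ℝ) (y v : β → ℝ) :
    (S⁻¹.toBlocks₁₁ *ᵥ x + S⁻¹.toBlocks₁₂ *ᵥ y) ⬝ᵥ ((S⁻¹.toBlocks₁₁⁻¹ * N) *ᵥ v) =
      (Nᵀ *ᵥ (x - S.toBlocks₁₂ *ᵥ (S.toBlocks₂₂⁻¹ *ᵥ y))) ⬝ᵥ v := by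
  have hE : S⁻¹.toBlocks₁₁.PosDef := hS.inv.submatrix Sum.inl_injective
  have hEs : S⁻¹.toBlocks₁₁⁻¹ᵀ = S⁻¹.toBlocks₁₁⁻¹ := (isHermitian_iff_isSymm.1 hE.isHermitian).inv
  have hres : S⁻¹.toBlocks₁₁⁻¹ *ᵥ (S⁻¹.toBlocks₁₁ *ᵥ x + S⁻¹.toBlocks₁₂ *ᵥ y) =
      x - S.toBlocks₁₂ *ᵥ (S.toBlocks₂₂⁻¹ *ᵥ y) := by
    rw [mulVec_add, mulVec_mulVec, mulVec_mulVec, nonsing_inv_mul _ hE.det_pos.ne'.isUnit,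
      one_mulVec, hS.inv_toBlocks₁₁_inv_mul_toBlocks₁₂_inv, neg_mulVec, ← mulVec_mulVec, sub_eq_add_neg]
  rw [← mulVec_mulVec, dotProduct_mulVec, ← mulVec_transpose, hEs, hres, dotProduct_mulVec,
    ← mulVec_transpose]

theorem PosDef.trace_inv_toBlocks₁₁_inv_mul_mul_toBlocks₂₁ (hS : S.PosDef) (N : Matrix α β ℝ) :
    (S⁻¹.toBlocks₁₁⁻¹ * N * S⁻¹.toBlocks₂₁).trace =
      -(Nᵀ * S.toBlocks₁₂ * S.toBlocks₂₂⁻¹).trace := by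
  have hP := isSymm_fromBlocks_iff.1
    ((fromBlocks_toBlocks S⁻¹).symm ▸ isHermitian_iff_isSymm.1 hS.inv.isHermitian)
  have h21 : S⁻¹.toBlocks₂₁ * S⁻¹.toBlocks₁₁⁻¹ = -(S.toBlocks₁₂ * S.toBlocks₂₂⁻¹)ᵀ := by
    rw [← hP.2.1, ← hP.1.inv.eq, ← transpose_mul, hS.inv_toBlocks₁₁_inv_mul_toBlocks₁₂_inv,
      transpose_neg]
  rw [trace_mul_cycle, h21, Matrix.neg_mul, trace_neg, ← trace_transpose, transpose_mul,
    transpose_transpose, Matrix.mul_assoc]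

end Matrix

theorem gaussian_divergence_equation_solution_general
    (d m : ℕ)
    (c Sig : Matrix (Fin d ⊕ Fin m) (Fin d ⊕ Fin m) ℝ)
    (hc : c.PosDef) (hSig : Sig.PosDef)
    (C : Matrix (Fin m) (Fin d) ℝ)
    (M : Matrix (Fin d) (Fin m) ℝ)
    (hM : M = (Sig⁻¹.toBlocks₁₁)⁻¹ * Cᵀ * c.toBlocks₂₂)
    (u : (Fin d → ℝ) → (Fin m → ℝ) → (Fin d → ℝ))
    (hu : ∀ x y, u x y = -((1 / 2 : ℝ) * gaussDensity Sig (Sum.elim x y)) •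
      (M *ᵥ (Sig⁻¹.toBlocks₂₁ *ᵥ x + Sig⁻¹.toBlocks₂₂ *ᵥ y)))
    (g : (Fin d → ℝ) → (Fin m → ℝ) → (Fin m → ℝ))
    (hg : ∀ x y, g x y = gaussDensity Sig (Sum.elim x y) •
      (c.toBlocks₂₂ *ᵥ (C *ᵥ (x - Sig.toBlocks₁₂ *ᵥ ((Sig.toBlocks₂₂)⁻¹ *ᵥ y))))) :
    ∀ (x : Fin d → ℝ) (y : Fin m → ℝ),
      (∑ i : Fin d, fderiv ℝ (fun x' => u x' y i) x (Pi.single i 1))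
        = -(1 / 2 : ℝ) * ∑ j : Fin m, fderiv ℝ (fun y' => g x y' j) y (Pi.single j 1) := by
  intro x y
  set N := Cᵀ * c.toBlocks₂₂
  set T := Nᵀ * Sig.toBlocks₁₂ * Sig.toBlocks₂₂⁻¹
  have hSymm : Sig.IsSymm := isHermitian_iff_isSymm.1 hSig.isHermitian
  have hcY : c.toBlocks₂₂.IsSymm :=
    isHermitian_iff_isSymm.1 (hc.submatrix Sum.inr_injective).isHermitian
  have hNT : Nᵀ = c.toBlocks₂₂ * C := by rw [transpose_mul, transpose_transpose, hcY.eq]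
  have hMN : M = Sig⁻¹.toBlocks₁₁⁻¹ * N := by rw [hM, Matrix.mul_assoc]
  have hA : ∀ x', (-(1 / 2 : ℝ) • (M * Sig⁻¹.toBlocks₂₁)) *ᵥ x' +
      -(1 / 2 : ℝ) • (M *ᵥ (Sig⁻¹.toBlocks₂₂ *ᵥ y)) =
      -(1 / 2 : ℝ) • (M *ᵥ (Sig⁻¹.toBlocks₂₁ *ᵥ x' + Sig⁻¹.toBlocks₂₂ *ᵥ y)) := fun x' => by
    rw [smul_mulVec, ← mulVec_mulVec, ← smul_add, ← mulVec_add]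
  have hB : ∀ y', (-T) *ᵥ y' + Nᵀ *ᵥ x = Nᵀ *ᵥ (x - Sig.toBlocks₁₂ *ᵥ (Sig.toBlocks₂₂⁻¹ *ᵥ y')) :=
    fun y' => by rw [mulVec_sub, mulVec_mulVec, mulVec_mulVec, neg_mulVec, sub_eq_neg_add]
  have hu' : (fun x' => u x' y) = fun x' => gaussDensity Sig (Sum.elim x' y) •
      ((-(1 / 2 : ℝ) • (M * Sig⁻¹.toBlocks₂₁)) *ᵥ x' +
        -(1 / 2 : ℝ) • (M *ᵥ (Sig⁻¹.toBlocks₂₂ *ᵥ y))) := by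
    funext x'
    rw [hu, hA, smul_smul]
    ring_nf
  have hg' : (fun y' => g x y') = fun y' => gaussDensity Sig (Sum.elim x y') •
      ((-T) *ᵥ y' + Nᵀ *ᵥ x) := by
    funext y'
    rw [hg, hB, hNT, mulVec_mulVec]
  change divergence (fun x' => u x' y) x = -(1 / 2) * divergence (fun y' => g x y') y
  rw [hu', hg', divergence_gaussDensity_sumElim_left_smul hSymm,
    divergence_gaussDensity_sumElim_right_smul hSymm, hA, hB, trace_smul, trace_neg,
    dotProduct_smul, hMN, hSig.trace_inv_toBlocks₁₁_inv_mul_mul_toBlocks₂₁,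
    hSig.dotProduct_inv_toBlocks₁₁_inv_mul_mulVec, dotProduct_comm]
  simp only [smul_eq_mul]
  ring

/-- In the Gaussian setting, with `M = ((Σ⁻¹)_X)⁻¹ Cᵀ c_Y` and
`u(x, y) = −½ M ((Σ⁻¹)_{YX} x + (Σ⁻¹)_Y y) p_Σ(x, y)`, one has, for every
`(x, y) ∈ ℝ^d × ℝ^m`,  `div_x u(x, y) = −½ div_y( g(x, ·) )(y)` where
`g(x, y) = c_Y C (x − Σ_{XY} (Σ_Y)⁻¹ y) p_Σ(x, y)`. -/
theorem gaussian_divergence_equation_solution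
    (d m : ℕ) (hd : 1 ≤ d) (hm : 1 ≤ m)
    (c Sig : Matrix (Fin d ⊕ Fin m) (Fin d ⊕ Fin m) ℝ)
    (hc : c.PosDef) (hSig : Sig.PosDef)
    (βX : Matrix (Fin m) (Fin d) ℝ)
    (C : Matrix (Fin m) (Fin d) ℝ)
    (hC : C = Sig⁻¹.toBlocks₂₁ + (c.toBlocks₂₂)⁻¹ * c.toBlocks₂₁ * Sig⁻¹.toBlocks₁₁ + βX)
    (M : Matrix (Fin d) (Fin m) ℝ)
    (hM : M = (Sig⁻¹.toBlocks₁₁)⁻¹ * Cᵀ * c.toBlocks₂₂)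
    (u : (Fin d → ℝ) → (Fin m → ℝ) → (Fin d → ℝ))
    (hu : ∀ x y, u x y = -((1 / 2 : ℝ) * gaussDensity Sig (Sum.elim x y)) •
      (M *ᵥ (Sig⁻¹.toBlocks₂₁ *ᵥ x + Sig⁻¹.toBlocks₂₂ *ᵥ y)))
    (g : (Fin d → ℝ) → (Fin m → ℝ) → (Fin m → ℝ))
    (hg : ∀ x y, g x y = gaussDensity Sig (Sum.elim x y) •
      (c.toBlocks₂₂ *ᵥ (C *ᵥ (x - Sig.toBlocks₁₂ *ᵥ ((Sig.toBlocks₂₂)⁻¹ *ᵥ y))))) :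
    ∀ (x : Fin d → ℝ) (y : Fin m → ℝ),
      (∑ i : Fin d, fderiv ℝ (fun x' => u x' y i) x (Pi.single i 1))
        = -(1 / 2 : ℝ) * ∑ j : Fin m, fderiv ℝ (fun y' => g x y' j) y (Pi.single j 1) :=
  gaussian_divergence_equation_solution_general d m c Sig hc hSig C M hM u hu g hg
end

section
/- In the Gaussian setting, the vector field w(x, y) = −½ (C⁰ x + D⁰ y) − ½ (c_Y)⁻¹ ((Σ⁻¹)_Y)⁻¹ Bᵀ c_X ( (Σ⁻¹)_X x + (Σ⁻¹)_{XY} y ) satisfies, for every (x, y) ∈ ℝ^d × ℝ^m, the identity div_y( c_Y ( ℓ_Y⁰(x, ·) − w(x, ·) ) p_Σ(x, ·) )(y) = −div_x( c_X ( ℓ_X(·, y) + ½ (Σ_X)⁻¹ (·) ) p_Σ(·, y) )(x), where ℓ_X(x, y) = −½ (A x + B y), ℓ_Y⁰(x, y) = −½ (C⁰ x + D⁰ y), div_y is the divergence in y of the indicated ℝ^m-valued map and div_x is the divergence in x of the indicated ℝ^d-valued map. -/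
/-!
Write `P = Σ⁻¹`, `g = P_X x + P_{XY} y` and `h = P_{YX} x + P_Y y`, so that `∇_x p_Σ = -p_Σ g` and
`∇_y p_Σ = -p_Σ h`. With `K = ½ c_X B (P_Y)⁻¹`, the field on the left is `c_Y (ℓ_Y⁰ - w) = Kᵀ g`,
and the Schur complement formula `(Σ_X)⁻¹ = P_X - P_{XY} (P_Y)⁻¹ P_{YX}` turns the field on the
right into `-K h`. For any `K`, both `div_y (p_Σ Kᵀ g)` and `div_x (p_Σ K h)` equal
`-∑ K_{ij} ∂²p_Σ / ∂x_i ∂y_j`; concretely both are `p_Σ (tr (K P_{YX}) - g ⬝ K h)`.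
-/

open Matrix MeasureTheory

namespace Matrix

variable {m n : Type*}

theorem PosDef.toBlocks₁₁ {R : Type*} [Ring R] [PartialOrder R] [StarRing R]
    {M : Matrix (m ⊕ n) (m ⊕ n) R} (hM : M.PosDef) : M.toBlocks₁₁.PosDef :=
  hM.submatrix Sum.inl_injective

theorem PosDef.toBlocks₂₂ {R : Type*} [Ring R] [PartialOrder R] [StarRing R]
    {M : Matrix (m ⊕ n) (m ⊕ n) R} (hM : M.PosDef) : M.toBlocks₂₂.PosDef :=
  hM.submatrix Sum.inr_injective

theorem PosDef.isSymm [Fintype n] {M : Matrix n n ℝ} (hM : M.PosDef) : M.IsSymm :=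
  isHermitian_iff_isSymm.1 hM.isHermitian

theorem IsSymm.transpose_toBlocks₁₂ {α : Type*} {M : Matrix (m ⊕ n) (m ⊕ n) α}
    (hM : M.IsSymm) : M.toBlocks₁₂ᵀ = M.toBlocks₂₁ :=
  (isSymm_fromBlocks_iff.1 (M.fromBlocks_toBlocks ▸ hM)).2.1

theorem IsSymm.toBlocks₂₂ {α : Type*} {M : Matrix (m ⊕ n) (m ⊕ n) α} (hM : M.IsSymm) :
    M.toBlocks₂₂.IsSymm :=
  (isSymm_fromBlocks_iff.1 (M.fromBlocks_toBlocks ▸ hM)).2.2.2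

variable [Fintype m] [Fintype n] [DecidableEq m] [DecidableEq n]

theorem inv_toBlocks₁₁_eq_sub {α : Type*} [CommRing α] {M : Matrix (m ⊕ n) (m ⊕ n) α}
    (hM : IsUnit M.det) (hD : IsUnit M⁻¹.toBlocks₂₂.det) :
    M.toBlocks₁₁⁻¹ =
      M⁻¹.toBlocks₁₁ - M⁻¹.toBlocks₁₂ * M⁻¹.toBlocks₂₂⁻¹ * M⁻¹.toBlocks₂₁ := by
  have hprod := fromBlocks_multiply M.toBlocks₁₁ M.toBlocks₁₂ M.toBlocks₂₁ M.toBlocks₂₂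
    M⁻¹.toBlocks₁₁ M⁻¹.toBlocks₁₂ M⁻¹.toBlocks₂₁ M⁻¹.toBlocks₂₂
  rw [fromBlocks_toBlocks, fromBlocks_toBlocks, mul_nonsing_inv M hM, ← fromBlocks_one] at hprod
  obtain ⟨h11, h12, -, -⟩ := fromBlocks_inj.1 hprod.symm
  apply inv_eq_right_inv
  calc M.toBlocks₁₁ * (M⁻¹.toBlocks₁₁ - M⁻¹.toBlocks₁₂ * M⁻¹.toBlocks₂₂⁻¹ * M⁻¹.toBlocks₂₁)
      = M.toBlocks₁₁ * M⁻¹.toBlocks₁₁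
          - M.toBlocks₁₁ * M⁻¹.toBlocks₁₂ * M⁻¹.toBlocks₂₂⁻¹ * M⁻¹.toBlocks₂₁ := by
        simp only [Matrix.mul_sub, Matrix.mul_assoc]
    _ = M.toBlocks₁₁ * M⁻¹.toBlocks₁₁
          + M.toBlocks₁₂ * M⁻¹.toBlocks₂₂ * M⁻¹.toBlocks₂₂⁻¹ * M⁻¹.toBlocks₂₁ := by
        rw [eq_neg_of_add_eq_zero_left h12]
        simp only [Matrix.neg_mul, sub_neg_eq_add]
    _ = 1 := by rw [mul_nonsing_inv_cancel_right _ _ hD, h11]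

theorem toBlocks₁₁_mul_inv_toBlocks₁₁_sub {c S : Matrix (m ⊕ n) (m ⊕ n) ℝ} {A : Matrix m m ℝ}
    {B : Matrix m n ℝ} (hc : IsUnit c.toBlocks₁₁.det) (hS : IsUnit S.det)
    (hD : IsUnit S⁻¹.toBlocks₂₂.det)
    (hA : A = S⁻¹.toBlocks₁₁ + c.toBlocks₁₁⁻¹ * c.toBlocks₁₂ * S⁻¹.toBlocks₂₁)
    (hB : B = S⁻¹.toBlocks₁₂ + c.toBlocks₁₁⁻¹ * c.toBlocks₁₂ * S⁻¹.toBlocks₂₂) :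
    c.toBlocks₁₁ * (S.toBlocks₁₁⁻¹ - A) =
      -(c.toBlocks₁₁ * B * S⁻¹.toBlocks₂₂⁻¹ * S⁻¹.toBlocks₂₁) := by
  rw [inv_toBlocks₁₁_eq_sub hS hD, hA, hB]
  simp only [Matrix.mul_add, Matrix.add_mul, Matrix.mul_sub, ← Matrix.mul_assoc,
    mul_nonsing_inv _ hc, Matrix.one_mul, mul_nonsing_inv_cancel_right _ _ hD]
  abel

theorem toBlocks₁₁_mulVec_half_smul_sub {c S : Matrix (m ⊕ n) (m ⊕ n) ℝ} {A : Matrix m m ℝ}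
    {B : Matrix m n ℝ} (hc : IsUnit c.toBlocks₁₁.det) (hS : IsUnit S.det)
    (hD : IsUnit S⁻¹.toBlocks₂₂.det)
    (hA : A = S⁻¹.toBlocks₁₁ + c.toBlocks₁₁⁻¹ * c.toBlocks₁₂ * S⁻¹.toBlocks₂₁)
    (hB : B = S⁻¹.toBlocks₁₂ + c.toBlocks₁₁⁻¹ * c.toBlocks₁₂ * S⁻¹.toBlocks₂₂)
    (x : m → ℝ) (y : n → ℝ) :
    c.toBlocks₁₁ *ᵥ ((1 / 2 : ℝ) • (S.toBlocks₁₁⁻¹ *ᵥ x) - (1 / 2 : ℝ) • (A *ᵥ x + B *ᵥ y))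
      = -(((1 / 2 : ℝ) • (c.toBlocks₁₁ * B * S⁻¹.toBlocks₂₂⁻¹)) *ᵥ
          (S⁻¹.toBlocks₂₁ *ᵥ x + S⁻¹.toBlocks₂₂ *ᵥ y)) := by
  have hy : S⁻¹.toBlocks₂₂⁻¹ *ᵥ S⁻¹.toBlocks₂₂ *ᵥ y = y := by
    rw [mulVec_mulVec, nonsing_inv_mul _ hD, one_mulVec]
  rw [← smul_sub, mulVec_add, sub_add_eq_sub_sub, ← sub_mulVec, mulVec_smul, mulVec_sub,
    mulVec_mulVec, toBlocks₁₁_mul_inv_toBlocks₁₁_sub hc hS hD hA hB]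
  simp only [smul_mulVec, neg_mulVec, ← mulVec_mulVec, hy]
  module

end Matrix

section Calculus

variable {ι n : Type*} [Fintype ι] [Fintype n] [DecidableEq n]

theorem hasFDerivAt_dotProduct_mulVec_self_s9 (M : Matrix ι ι ℝ) (z : ι → ℝ) :
    HasFDerivAt (fun w => w ⬝ᵥ M *ᵥ w)
      (∑ i, (z i • (ContinuousLinearMap.proj i).comp (mulVecLin M).toContinuousLinearMap
        + (M *ᵥ z) i • ContinuousLinearMap.proj i)) z :=
  HasFDerivAt.fun_sum fun i _ => (hasFDerivAt_apply i z).mul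
    ((ContinuousLinearMap.proj i).comp (mulVecLin M).toContinuousLinearMap).hasFDerivAt

theorem hasFDerivAt_gaussDensity_s9 {S : Matrix n n ℝ} (hS : S⁻¹.IsSymm) (z : n → ℝ) :
    HasFDerivAt (gaussDensity S)
      (-gaussDensity S z • ∑ i, (S⁻¹ *ᵥ z) i • (ContinuousLinearMap.proj i : (n → ℝ) →L[ℝ] ℝ))
      z := by
  refine (((hasFDerivAt_dotProduct_mulVec_self_s9 S⁻¹ z).const_mul (-(1 / 2 : ℝ))).exp.const_mul
    ((2 * Real.pi) ^ (-(Fintype.card n : ℝ) / 2) * S.det ^ (-(1 : ℝ) / 2))).congr_fderiv ?_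
  refine ContinuousLinearMap.ext fun v => ?_
  have hsymm : z ⬝ᵥ S⁻¹ *ᵥ v = (S⁻¹ *ᵥ z) ⬝ᵥ v := by
    rw [dotProduct_mulVec, ← mulVec_transpose, hS.eq, dotProduct_comm]
  simp only [_root_.smul_apply, FunLike.coe_sum, Finset.sum_apply,
    _root_.add_apply, ContinuousLinearMap.comp_apply, ContinuousLinearMap.proj_apply,
    LinearMap.coe_toContinuousLinearMap', mulVecLin_apply, smul_eq_mul, Finset.sum_add_distrib]
  change _ * (_ * (_ * (z ⬝ᵥ S⁻¹ *ᵥ v + (S⁻¹ *ᵥ z) ⬝ᵥ v))) = -gaussDensity S z * ((S⁻¹ *ᵥ z) ⬝ᵥ v)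
  rw [hsymm, gaussDensity]
  ring

variable [DecidableEq ι]

theorem sum_fderiv_mul_apply_single_of_affine {ρ : (ι → ℝ) → ℝ} {u : ι → ℝ}
    (hρ : DifferentiableAt ℝ ρ u) {F : (ι → ℝ) → ι → ℝ} (N : Matrix ι ι ℝ) (b : ι → ℝ)
    (hF : ∀ u, F u = N *ᵥ u + b) :
    ∑ j, fderiv ℝ (fun u => ρ u * F u j) u (Pi.single j 1)
      = ∑ j, fderiv ℝ ρ u (Pi.single j 1) * F u j + ρ u * N.trace := by
  have hFj (j : ι) : HasFDerivAt (fun u => F u j)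
      ((ContinuousLinearMap.proj j).comp (mulVecLin N).toContinuousLinearMap) u := by
    simp only [hF]
    exact ((ContinuousLinearMap.proj j).comp (mulVecLin N).toContinuousLinearMap).hasFDerivAt
      |>.add_const (b j)
  simp only [fderiv_fun_mul hρ (hFj _).differentiableAt, (hFj _).fderiv, _root_.add_apply,
    _root_.smul_apply, ContinuousLinearMap.comp_apply, ContinuousLinearMap.proj_apply,
    LinearMap.coe_toContinuousLinearMap', mulVecLin_apply, mulVec_single_one, smul_eq_mul,
    Finset.sum_add_distrib, trace, diag, col_apply, Finset.mul_sum]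
  rw [add_comm]
  simp only [mul_comm]

theorem sum_fderiv_gaussDensity_affine_mul_apply_single {S : Matrix n n ℝ} (hS : S⁻¹.IsSymm)
    {φ : (ι → ℝ) → n → ℝ} (z₀ : n → ℝ) (E : Matrix n ι ℝ) (hφ : ∀ u, φ u = z₀ + E *ᵥ u)
    {F : (ι → ℝ) → ι → ℝ} (N : Matrix ι ι ℝ) (b : ι → ℝ) (hF : ∀ u, F u = N *ᵥ u + b)
    (u : ι → ℝ) :
    ∑ j, fderiv ℝ (fun u => gaussDensity S (φ u) * F u j) u (Pi.single j 1)
      = gaussDensity S (φ u) * (N.trace - (S⁻¹ *ᵥ φ u) ᵥ* E ⬝ᵥ F u) := by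
  simp only [hφ]
  have hρ : HasFDerivAt (fun u => gaussDensity S (z₀ + E *ᵥ u)) _ u :=
    (hasFDerivAt_gaussDensity_s9 hS _).comp u
      ((mulVecLin E).toContinuousLinearMap.hasFDerivAt.const_add z₀)
  rw [sum_fderiv_mul_apply_single_of_affine hρ.differentiableAt N b hF, hρ.fderiv]
  simp only [ContinuousLinearMap.comp_apply, _root_.smul_apply, FunLike.coe_sum,
    Finset.sum_apply, ContinuousLinearMap.proj_apply, LinearMap.coe_toContinuousLinearMap',
    mulVecLin_apply, smul_eq_mul, mulVec_single_one]
  change ∑ j, (-_ * ((S⁻¹ *ᵥ (z₀ + E *ᵥ u)) ᵥ* E) j) * F u j + _ = _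
  simp only [dotProduct, mul_sub, Finset.mul_sum, neg_mul, Finset.sum_neg_distrib, mul_assoc]
  ring

end Calculus

section Slices

variable {m n : Type*} [Fintype m] [Fintype n] [DecidableEq m] [DecidableEq n]
  {S : Matrix (m ⊕ n) (m ⊕ n) ℝ}

theorem sum_fderiv_gaussDensity_sumElim_left_mul_apply_single (hS : S⁻¹.IsSymm)
    {F : (m → ℝ) → m → ℝ} (N : Matrix m m ℝ) (b : m → ℝ) (hF : ∀ x, F x = N *ᵥ x + b)
    (x : m → ℝ) (y : n → ℝ) :
    ∑ i, fderiv ℝ (fun x' => gaussDensity S (Sum.elim x' y) * F x' i) x (Pi.single i 1)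
      = gaussDensity S (Sum.elim x y) *
          (N.trace - (S⁻¹.toBlocks₁₁ *ᵥ x + S⁻¹.toBlocks₁₂ *ᵥ y) ⬝ᵥ F x) := by
  have hφ (x' : m → ℝ) :
      Sum.elim x' y = Sum.elim (0 : m → ℝ) y + fromRows (1 : Matrix m m ℝ) 0 *ᵥ x' := by
    simp [← Sum.elim_add_add]
  rw [sum_fderiv_gaussDensity_affine_mul_apply_single hS _ _ hφ N b hF]
  conv_lhs => rw [← fromBlocks_toBlocks S⁻¹]
  simp [fromBlocks_mulVec]

theorem sum_fderiv_gaussDensity_sumElim_right_mul_apply_single (hS : S⁻¹.IsSymm)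
    {F : (n → ℝ) → n → ℝ} (N : Matrix n n ℝ) (b : n → ℝ) (hF : ∀ y, F y = N *ᵥ y + b)
    (x : m → ℝ) (y : n → ℝ) :
    ∑ j, fderiv ℝ (fun y' => gaussDensity S (Sum.elim x y') * F y' j) y (Pi.single j 1)
      = gaussDensity S (Sum.elim x y) *
          (N.trace - (S⁻¹.toBlocks₂₁ *ᵥ x + S⁻¹.toBlocks₂₂ *ᵥ y) ⬝ᵥ F y) := by
  have hφ (y' : n → ℝ) :
      Sum.elim x y' = Sum.elim x 0 + fromRows (0 : Matrix m n ℝ) 1 *ᵥ y' := by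
    simp [← Sum.elim_add_add]
  rw [sum_fderiv_gaussDensity_affine_mul_apply_single hS _ _ hφ N b hF]
  conv_lhs => rw [← fromBlocks_toBlocks S⁻¹]
  simp [fromBlocks_mulVec]

theorem sum_fderiv_gaussDensity_sumElim_right_eq_neg_left (hS : S⁻¹.IsSymm)
    (K : Matrix m n ℝ) (x : m → ℝ) (y : n → ℝ) :
    ∑ j, fderiv ℝ (fun y' => gaussDensity S (Sum.elim x y') *
        (Kᵀ *ᵥ (S⁻¹.toBlocks₁₁ *ᵥ x + S⁻¹.toBlocks₁₂ *ᵥ y')) j) y (Pi.single j 1)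
      = -∑ i, fderiv ℝ (fun x' => gaussDensity S (Sum.elim x' y) *
          (-(K *ᵥ (S⁻¹.toBlocks₂₁ *ᵥ x' + S⁻¹.toBlocks₂₂ *ᵥ y))) i) x (Pi.single i 1) := by
  rw [sum_fderiv_gaussDensity_sumElim_right_mul_apply_single hS (Kᵀ * S⁻¹.toBlocks₁₂)
      (Kᵀ *ᵥ (S⁻¹.toBlocks₁₁ *ᵥ x)) (fun _ => by rw [mulVec_add, add_comm, mulVec_mulVec]),
    sum_fderiv_gaussDensity_sumElim_left_mul_apply_single hS (-(K * S⁻¹.toBlocks₂₁))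
      (-(K *ᵥ (S⁻¹.toBlocks₂₂ *ᵥ y))) (fun _ => by rw [mulVec_add, mulVec_mulVec, neg_add,
        neg_mulVec])]
  have htrace : (Kᵀ * S⁻¹.toBlocks₁₂).trace = (K * S⁻¹.toBlocks₂₁).trace := by
    rw [← hS.transpose_toBlocks₁₂, ← trace_transpose (Kᵀ * _), transpose_mul, transpose_transpose,
      trace_mul_comm]
  have hdot : (S⁻¹.toBlocks₂₁ *ᵥ x + S⁻¹.toBlocks₂₂ *ᵥ y) ⬝ᵥ
        Kᵀ *ᵥ (S⁻¹.toBlocks₁₁ *ᵥ x + S⁻¹.toBlocks₁₂ *ᵥ y)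
      = (S⁻¹.toBlocks₁₁ *ᵥ x + S⁻¹.toBlocks₁₂ *ᵥ y) ⬝ᵥ
        K *ᵥ (S⁻¹.toBlocks₂₁ *ᵥ x + S⁻¹.toBlocks₂₂ *ᵥ y) := by
    rw [dotProduct_mulVec, vecMul_transpose, dotProduct_comm]
  rw [trace_neg, dotProduct_neg, htrace, hdot]
  ring

end Slices

theorem gaussian_worst_case_fokker_planck_general
    (d m : ℕ)
    (c Sig : Matrix (Fin d ⊕ Fin m) (Fin d ⊕ Fin m) ℝ)
    (hc : c.PosDef) (hSig : Sig.PosDef)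
    (A : Matrix (Fin d) (Fin d) ℝ)
    (hA : A = Sig⁻¹.toBlocks₁₁ + (c.toBlocks₁₁)⁻¹ * c.toBlocks₁₂ * Sig⁻¹.toBlocks₂₁)
    (B : Matrix (Fin d) (Fin m) ℝ)
    (hB : B = Sig⁻¹.toBlocks₁₂ + (c.toBlocks₁₁)⁻¹ * c.toBlocks₁₂ * Sig⁻¹.toBlocks₂₂)
    (C0 : Matrix (Fin m) (Fin d) ℝ)
    (D0 : Matrix (Fin m) (Fin m) ℝ)
    (ℓX : (Fin d → ℝ) → (Fin m → ℝ) → (Fin d → ℝ))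
    (hℓX : ∀ x y, ℓX x y = -((1 / 2 : ℝ) • (A *ᵥ x + B *ᵥ y)))
    (ℓY0 : (Fin d → ℝ) → (Fin m → ℝ) → (Fin m → ℝ))
    (hℓY0 : ∀ x y, ℓY0 x y = -((1 / 2 : ℝ) • (C0 *ᵥ x + D0 *ᵥ y)))
    (w : (Fin d → ℝ) → (Fin m → ℝ) → (Fin m → ℝ))
    (hw : ∀ x y, w x y = -((1 / 2 : ℝ) • (C0 *ᵥ x + D0 *ᵥ y))
      - (1 / 2 : ℝ) • (((c.toBlocks₂₂)⁻¹ * (Sig⁻¹.toBlocks₂₂)⁻¹ * Bᵀ * c.toBlocks₁₁) *ᵥ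
          (Sig⁻¹.toBlocks₁₁ *ᵥ x + Sig⁻¹.toBlocks₁₂ *ᵥ y))) :
    ∀ (x : Fin d → ℝ) (y : Fin m → ℝ),
      (∑ j : Fin m, fderiv ℝ (fun y' => gaussDensity Sig (Sum.elim x y') *
          (c.toBlocks₂₂ *ᵥ (ℓY0 x y' - w x y')) j) y (Pi.single j 1))
        = -(∑ i : Fin d, fderiv ℝ (fun x' => gaussDensity Sig (Sum.elim x' y) *
            (c.toBlocks₁₁ *ᵥ (ℓX x' y + (1 / 2 : ℝ) • ((Sig.toBlocks₁₁)⁻¹ *ᵥ x'))) i)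
          x (Pi.single i 1)) := by
  intro x y
  have hP := hSig.inv.isSymm
  have hD := hSig.inv.toBlocks₂₂.det_pos.ne'.isUnit
  set K := (1 / 2 : ℝ) • (c.toBlocks₁₁ * B * (Sig⁻¹.toBlocks₂₂)⁻¹)
  have hL (y' : Fin m → ℝ) : c.toBlocks₂₂ *ᵥ (ℓY0 x y' - w x y')
      = Kᵀ *ᵥ (Sig⁻¹.toBlocks₁₁ *ᵥ x + Sig⁻¹.toBlocks₁₂ *ᵥ y') := by
    rw [hℓY0, hw, sub_sub_cancel, mulVec_smul, mulVec_mulVec]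
    simp only [K, transpose_smul, transpose_mul, hc.toBlocks₁₁.isSymm.eq, transpose_nonsing_inv,
      hP.toBlocks₂₂.eq, ← Matrix.mul_assoc, smul_mulVec,
      mul_nonsing_inv _ hc.toBlocks₂₂.det_pos.ne'.isUnit, Matrix.one_mul]
  have hR (x' : Fin d → ℝ) :
      c.toBlocks₁₁ *ᵥ (ℓX x' y + (1 / 2 : ℝ) • ((Sig.toBlocks₁₁)⁻¹ *ᵥ x'))
        = -(K *ᵥ (Sig⁻¹.toBlocks₂₁ *ᵥ x' + Sig⁻¹.toBlocks₂₂ *ᵥ y)) := by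
    rw [hℓX, neg_add_eq_sub]
    exact toBlocks₁₁_mulVec_half_smul_sub hc.toBlocks₁₁.det_pos.ne'.isUnit
      hSig.det_pos.ne'.isUnit hD hA hB x' y
  simp only [hL, hR]
  exact sum_fderiv_gaussDensity_sumElim_right_eq_neg_left hP K x y

/-- In the Gaussian setting, the vector field
`w(x, y) = −½ (C⁰ x + D⁰ y) − ½ (c_Y)⁻¹ ((Σ⁻¹)_Y)⁻¹ Bᵀ c_X ((Σ⁻¹)_X x + (Σ⁻¹)_{XY} y)`
satisfies, for every `(x, y) ∈ ℝ^d × ℝ^m`, the identity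
`div_y( c_Y (ℓ_Y⁰(x, ·) − w(x, ·)) p_Σ(x, ·) )(y)
   = −div_x( c_X (ℓ_X(·, y) + ½ (Σ_X)⁻¹ (·)) p_Σ(·, y) )(x)`
where `ℓ_X(x, y) = −½ (A x + B y)` and `ℓ_Y⁰(x, y) = −½ (C⁰ x + D⁰ y)`. -/
theorem gaussian_worst_case_fokker_planck
    (d m : ℕ) (hd : 1 ≤ d) (hm : 1 ≤ m)
    (c Sig : Matrix (Fin d ⊕ Fin m) (Fin d ⊕ Fin m) ℝ)
    (hc : c.PosDef) (hSig : Sig.PosDef)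
    (A : Matrix (Fin d) (Fin d) ℝ)
    (hA : A = Sig⁻¹.toBlocks₁₁ + (c.toBlocks₁₁)⁻¹ * c.toBlocks₁₂ * Sig⁻¹.toBlocks₂₁)
    (B : Matrix (Fin d) (Fin m) ℝ)
    (hB : B = Sig⁻¹.toBlocks₁₂ + (c.toBlocks₁₁)⁻¹ * c.toBlocks₁₂ * Sig⁻¹.toBlocks₂₂)
    (C0 : Matrix (Fin m) (Fin d) ℝ)
    (hC0 : C0 = Sig⁻¹.toBlocks₂₁ + (c.toBlocks₂₂)⁻¹ * c.toBlocks₂₁ * Sig⁻¹.toBlocks₁₁)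
    (D0 : Matrix (Fin m) (Fin m) ℝ)
    (hD0 : D0 = Sig⁻¹.toBlocks₂₂ + (c.toBlocks₂₂)⁻¹ * c.toBlocks₂₁ * Sig⁻¹.toBlocks₁₂)
    (ℓX : (Fin d → ℝ) → (Fin m → ℝ) → (Fin d → ℝ))
    (hℓX : ∀ x y, ℓX x y = -((1 / 2 : ℝ) • (A *ᵥ x + B *ᵥ y)))
    (ℓY0 : (Fin d → ℝ) → (Fin m → ℝ) → (Fin m → ℝ))
    (hℓY0 : ∀ x y, ℓY0 x y = -((1 / 2 : ℝ) • (C0 *ᵥ x + D0 *ᵥ y)))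
    (w : (Fin d → ℝ) → (Fin m → ℝ) → (Fin m → ℝ))
    (hw : ∀ x y, w x y = -((1 / 2 : ℝ) • (C0 *ᵥ x + D0 *ᵥ y))
      - (1 / 2 : ℝ) • (((c.toBlocks₂₂)⁻¹ * (Sig⁻¹.toBlocks₂₂)⁻¹ * Bᵀ * c.toBlocks₁₁) *ᵥ
          (Sig⁻¹.toBlocks₁₁ *ᵥ x + Sig⁻¹.toBlocks₁₂ *ᵥ y))) :
    ∀ (x : Fin d → ℝ) (y : Fin m → ℝ),
      (∑ j : Fin m, fderiv ℝ (fun y' => gaussDensity Sig (Sum.elim x y') *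
          (c.toBlocks₂₂ *ᵥ (ℓY0 x y' - w x y')) j) y (Pi.single j 1))
        = -(∑ i : Fin d, fderiv ℝ (fun x' => gaussDensity Sig (Sum.elim x' y) *
            (c.toBlocks₁₁ *ᵥ (ℓX x' y + (1 / 2 : ℝ) • ((Sig.toBlocks₁₁)⁻¹ *ᵥ x'))) i)
          x (Pi.single i 1)) :=
  gaussian_worst_case_fokker_planck_general d m c Sig hc hSig A hA B hB C0 D0 ℓX hℓX ℓY0 hℓY0 w hw
end

section
/- For the Central Tendency Ornstein–Uhlenbeck specification, the robust growth-optimal strategy coincides with the CTOU growth-optimal strategy: with the stated definitions one has β_Y = −2κ_Y/c_Y, M_X = 2κ_X/c_X and M_Y = −2κ_X/c_X; consequently −½(M_X x + M_Y y) = −(κ_X/c_X)(x − y) for all x, y ∈ ℝ. -/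
/-!
Over a field the inverse of a 2×2 matrix is its adjugate scaled by the inverse determinant, so for
`Σ = !![a, b; b, d]` the coefficients `M_X`, `M_Y` are explicit rational functions of `a, b, d`.
For the CTOU covariance, `b (κ_X + κ_Y) = κ_X d` and `2 κ_Y d = c_Y` make them collapse to
`± 2 κ_X / c_X`. The value of `β_Y` needs no computation: the `(2,2)` entry of `Σ⁻¹ Σ = 1`
gives `β_Y = -1 / Σ₂₂`.
-/

open Matrix

namespace Matrix

theorem inv_fin_two_of {K : Type*} [Field K] (a b c d : K) :
    (!![a, b; c, d])⁻¹ = (a * d - b * c)⁻¹ • !![d, -b; -c, a] := by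
  rw [inv_def, Ring.inverse_eq_inv, det_fin_two_of, adjugate_fin_two_of]

theorem inv_one_one_add_inv_one_zero_mul_div {K : Type*} [Field K] (S : Matrix (Fin 2) (Fin 2) K)
    (hS : IsUnit S.det) (h11 : S 1 1 ≠ 0) :
    S⁻¹ 1 1 + S⁻¹ 1 0 * S 0 1 / S 1 1 = (S 1 1)⁻¹ := by
  have h := congrFun (congrFun (nonsing_inv_mul S hS) 1) 1
  simp only [mul_apply, Fin.sum_univ_two, one_apply_eq] at h
  field_simp
  linear_combination h

end Matrix

section RobustFeedback

variable {K : Type*} [Field K]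

/-- The paper's `M_X` (and below `M_Y`) with `β_X = 0`, so that `C = (Σ⁻¹)₂₁`; `r = c_Y / c_X`. -/
noncomputable def robustFeedbackX (r : K) (S : Matrix (Fin 2) (Fin 2) K) : K :=
  S⁻¹ 0 0 + r * S⁻¹ 1 0 * S⁻¹ 1 0 / S⁻¹ 0 0

noncomputable def robustFeedbackY (r : K) (S : Matrix (Fin 2) (Fin 2) K) : K :=
  S⁻¹ 0 1 + r * S⁻¹ 1 0 * S⁻¹ 1 1 / S⁻¹ 0 0

variable (r a b d : K)

theorem robustFeedbackX_of_symm (hd : d ≠ 0) :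
    robustFeedbackX r !![a, b; b, d] = (d ^ 2 + r * b ^ 2) / (d * (a * d - b * b)) := by
  rw [robustFeedbackX, inv_fin_two_of]
  simp only [Matrix.smul_apply, of_apply, cons_val', cons_val_zero, cons_val_one, empty_val',
    cons_val_fin_one, smul_eq_mul]
  field_simp

theorem robustFeedbackY_of_symm (hd : d ≠ 0) :
    robustFeedbackY r !![a, b; b, d] = -(b * (d + r * a)) / (d * (a * d - b * b)) := by
  rw [robustFeedbackY, inv_fin_two_of]
  simp only [Matrix.smul_apply, of_apply, cons_val', cons_val_zero, cons_val_one, empty_val',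
    cons_val_fin_one, smul_eq_mul]
  field_simp
  ring

end RobustFeedback

section CTOU

variable {cX cY κX κY : ℝ}

noncomputable def ctouCov (cX cY κX κY : ℝ) : Matrix (Fin 2) (Fin 2) ℝ :=
  !![cX / (2 * κX) + cY * κX / (2 * κY * (κX + κY)), cY * κX / (2 * κY * (κX + κY));
    cY * κX / (2 * κY * (κX + κY)), cY / (2 * κY)]

theorem ctouCov_det (hκX : κX ≠ 0) (hκY : κY ≠ 0) (hκ : κX + κY ≠ 0) :
    (ctouCov cX cY κX κY).det =
      cY * (cX * (κX + κY) ^ 2 + cY * κX ^ 2) / (4 * κX * κY * (κX + κY) ^ 2) := by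
  rw [ctouCov, det_fin_two_of]
  field_simp
  ring

variable (hcX : 0 < cX) (hcY : 0 < cY) (hκX : 0 < κX) (hκY : 0 < κY)
include hcX hcY hκX hκY

theorem ctouCov_det_pos : 0 < (ctouCov cX cY κX κY).det := by
  rw [ctouCov_det hκX.ne' hκY.ne' (by positivity)]
  positivity

theorem robustFeedbackX_ctouCov :
    robustFeedbackX (cY / cX) (ctouCov cX cY κX κY) = 2 * κX / cX := by
  have hdet := ctouCov_det (cX := cX) (cY := cY) hκX.ne' hκY.ne' (by positivity)
  rw [ctouCov, det_fin_two_of] at hdet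
  rw [ctouCov, robustFeedbackX_of_symm _ _ _ _ (by positivity), hdet]
  field_simp
  ring

theorem robustFeedbackY_ctouCov :
    robustFeedbackY (cY / cX) (ctouCov cX cY κX κY) = -(2 * κX / cX) := by
  have hdet := ctouCov_det (cX := cX) (cY := cY) hκX.ne' hκY.ne' (by positivity)
  rw [ctouCov, det_fin_two_of] at hdet
  rw [ctouCov, robustFeedbackY_of_symm _ _ _ _ (by positivity), hdet]
  field_simp
  ring

end CTOU

/-- For the Central Tendency Ornstein–Uhlenbeck specification
(`d = m = 1`, constant diffusion `c = diag(c_X, c_Y)`, stationary covariance `Σ`,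
`β_X = 0`), the robust growth-optimal strategy coincides with the CTOU
growth-optimal strategy: `β_Y = −2κ_Y/c_Y`, `M_X = 2κ_X/c_X`, `M_Y = −2κ_X/c_X`,
and consequently `−½(M_X x + M_Y y) = −(κ_X/c_X)(x − y)` for all `x, y ∈ ℝ`. -/
theorem ctou_robust_strategy
    (cX cY κX κY : ℝ) (hcX : 0 < cX) (hcY : 0 < cY) (hκX : 0 < κX) (hκY : 0 < κY)
    (q : ℝ) (hq : q = cY * κX / (2 * κY * (κX + κY)))
    (Sig : Matrix (Fin 2) (Fin 2) ℝ)
    (hSig : Sig = !![cX / (2 * κX) + q, q; q, cY / (2 * κY)])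
    (βX : ℝ) (hβX : βX = 0)
    (A B C βY MX MY : ℝ)
    (hA : A = Sig⁻¹ 0 0) (hB : B = Sig⁻¹ 0 1) (hC : C = Sig⁻¹ 1 0 + βX)
    (hβY : βY = -(Sig⁻¹ 1 1 + C * Sig 0 1 / Sig 1 1))
    (hMX : MX = A + (cY / cX) * C * Sig⁻¹ 1 0 / Sig⁻¹ 0 0)
    (hMY : MY = B + (cY / cX) * C * Sig⁻¹ 1 1 / Sig⁻¹ 0 0) :
    βY = -(2 * κY / cY) ∧ MX = 2 * κX / cX ∧ MY = -(2 * κX / cX) ∧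
      ∀ x y : ℝ, -(1 / 2 : ℝ) * (MX * x + MY * y) = -(κX / cX) * (x - y) := by
  subst hq hβX hA hB hC
  obtain rfl : Sig = ctouCov cX cY κX κY := hSig
  rw [add_zero] at hβY hMX hMY
  have hSig11 : ctouCov cX cY κX κY 1 1 = cY / (2 * κY) := rfl
  have hβY' : βY = -(2 * κY / cY) := by
    rw [hβY, inv_one_one_add_inv_one_zero_mul_div _ (ctouCov_det_pos hcX hcY hκX hκY).ne'.isUnit
      (hSig11 ▸ by positivity), hSig11, inv_div]
  have hMX' : MX = 2 * κX / cX := hMX.trans (robustFeedbackX_ctouCov hcX hcY hκX hκY)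
  have hMY' : MY = -(2 * κX / cX) := hMY.trans (robustFeedbackY_ctouCov hcX hcY hκX hκY)
  refine ⟨hβY', hMX', hMY', fun x y => ?_⟩
  rw [hMX', hMY']
  ring
end

section
/- In the stochastic volatility model, the function u(x, y) = [ ( −σ³ x³ + 2ρσ² x² y + 4κσ x y² + (3σ³ − 4κνσ) x y − 8κρ y³ + (8κνρ − 2ρσ²) y² ) / (8 σ y²) ] · p(x, y) satisfies, for every x ∈ ℝ and y > 0, the divergence equation ∂u/∂x (x, y) = ∂/∂y ( σ² y · ℓ_Y(x, y) · p(x, y) ), where ℓ_Y(x, y) = x²/(4y²) − 1/(4y) − ρ x/(2σ y). -/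
/-! Both sides are explicit rational multiples of `p`. In `x` the Gaussian factor of `p` has
logarithmic derivative `-x/y`; in `y` the density has logarithmic derivative
`x²/(2y²) - 1/(2y) + (α-1)/y - β`, and `σ² y ℓ_Y = σ²x²/(4y) - σ²/4 - σρx/2` has derivative
`-σ²x²/(4y²)`. Once `α` and `β` are expressed through `κ, ν, σ`, the two rational multipliers
coincide identically. -/

open Real

noncomputable def gaussGammaDensity (α β x y : ℝ) : ℝ :=
  (2 * π * y) ^ (-(1 : ℝ) / 2) * exp (-(x ^ 2) / (2 * y)) *
    (β ^ α / Gamma α) * y ^ (α - 1) * exp (-β * y)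

lemma hasDerivAt_cubic (a b c d x : ℝ) :
    HasDerivAt (fun x => a * x ^ 3 + b * x ^ 2 + c * x + d) (3 * a * x ^ 2 + 2 * b * x + c) x :=
  ((((hasDerivAt_pow 3 x).const_mul a).add ((hasDerivAt_pow 2 x).const_mul b)).add
    ((hasDerivAt_id x).const_mul c)).add_const d |>.congr_deriv (by norm_num; ring)

lemma hasDerivAt_rpow_const_eq_mul_div {x : ℝ} (hx : x ≠ 0) (r : ℝ) :
    HasDerivAt (fun y => y ^ r) (x ^ r * (r / x)) x :=
  (Real.hasDerivAt_rpow_const (Or.inl hx)).congr_deriv (by rw [Real.rpow_sub_one hx]; ring)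

lemma hasDerivAt_gaussGammaDensity_fst (α β x y : ℝ) :
    HasDerivAt (fun x => gaussGammaDensity α β x y) (-(x / y) * gaussGammaDensity α β x y) x := by
  have hexponent : HasDerivAt (fun x => -(x ^ 2) / (2 * y)) (-(x / y)) x :=
    ((hasDerivAt_pow 2 x).neg.div_const (2 * y)).congr_deriv (by norm_num; ring)
  refine ((hexponent.exp.const_mul ((2 * π * y) ^ (-(1 : ℝ) / 2))).mul_const
    (β ^ α / Gamma α * y ^ (α - 1) * exp (-β * y))).congr_of_eventuallyEq
    (.of_forall fun x => ?_) |>.congr_deriv ?_ <;>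
  · simp only [gaussGammaDensity]
    ring

lemma hasDerivAt_gaussGammaDensity_snd (α β x : ℝ) {y : ℝ} (hy : y ≠ 0) :
    HasDerivAt (gaussGammaDensity α β x)
      (gaussGammaDensity α β x y * (x ^ 2 / (2 * y ^ 2) - 1 / (2 * y) + (α - 1) / y - β)) y := by
  have h2πy : 2 * π * y ≠ 0 := mul_ne_zero (by positivity) hy
  have hnorm := (hasDerivAt_rpow_const_eq_mul_div h2πy (-1 / 2)).comp y
    ((hasDerivAt_id y).const_mul (2 * π))
  have hgauss := ((hasDerivAt_const y (-(x ^ 2))).div ((hasDerivAt_id y).const_mul 2)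
    (by simpa using hy)).exp
  have hpow := hasDerivAt_rpow_const_eq_mul_div hy (α - 1)
  have hrate := ((hasDerivAt_id y).const_mul (-β)).exp
  refine ((((hnorm.mul hgauss).mul_const (β ^ α / Gamma α)).mul hpow).mul hrate).congr_deriv ?_
  simp only [gaussGammaDensity, Function.comp_def, id, Pi.mul_apply, Pi.div_apply]
  field_simp
  ring

lemma HasDerivAt.mul_gaussGammaDensity_fst {f : ℝ → ℝ} {f' x : ℝ} (hf : HasDerivAt f f' x)
    (α β y : ℝ) :
    HasDerivAt (fun x => f x * gaussGammaDensity α β x y)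
      ((f' - f x * (x / y)) * gaussGammaDensity α β x y) x :=
  (hf.mul (hasDerivAt_gaussGammaDensity_fst α β x y)).congr_deriv (by ring)

lemma HasDerivAt.mul_gaussGammaDensity_snd {f : ℝ → ℝ} {f' y : ℝ} (hf : HasDerivAt f f' y)
    (α β x : ℝ) (hy : y ≠ 0) :
    HasDerivAt (fun y => f y * gaussGammaDensity α β x y)
      ((f' + f y * (x ^ 2 / (2 * y ^ 2) - 1 / (2 * y) + (α - 1) / y - β))
        * gaussGammaDensity α β x y) y :=
  (hf.mul (hasDerivAt_gaussGammaDensity_snd α β x hy)).congr_deriv (by ring)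

lemma hasDerivAt_diffusion_mul_ellY {σ : ℝ} (hσ : σ ≠ 0) (ρ x : ℝ) {y : ℝ} (hy : y ≠ 0) :
    HasDerivAt (fun y => σ ^ 2 * y * (x ^ 2 / (4 * y ^ 2) - 1 / (4 * y) - ρ * x / (2 * σ * y)))
      (-(σ ^ 2 * x ^ 2 / (4 * y ^ 2))) y := by
  refine (((hasDerivAt_inv hy).const_mul (σ ^ 2 * x ^ 2 / 4)).sub_const
    (σ ^ 2 / 4 + σ * ρ * x / 2)).congr_of_eventuallyEq ?_ |>.congr_deriv (by ring)
  filter_upwards [eventually_ne_nhds hy] with y hy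
  field_simp
  ring

theorem stochastic_volatility_divergence_equation_general
    (κ ν σ : ℝ) (hσ : 0 < σ)
    (ρ : ℝ)
    (α β : ℝ) (hα : α = 2 * κ * ν / σ ^ 2) (hβ : β = 2 * κ / σ ^ 2)
    (p : ℝ → ℝ → ℝ)
    (hp : ∀ x y : ℝ, p x y =
      (2 * Real.pi * y) ^ (-(1 : ℝ) / 2) * Real.exp (-(x ^ 2) / (2 * y)) *
        (β ^ α / Real.Gamma α) * y ^ (α - 1) * Real.exp (-β * y))
    (ℓY : ℝ → ℝ → ℝ)
    (hℓY : ∀ x y : ℝ, ℓY x y = x ^ 2 / (4 * y ^ 2) - 1 / (4 * y) - ρ * x / (2 * σ * y))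
    (u : ℝ → ℝ → ℝ)
    (hu : ∀ x y : ℝ, u x y =
      ((-σ ^ 3 * x ^ 3 + 2 * ρ * σ ^ 2 * x ^ 2 * y + 4 * κ * σ * x * y ^ 2
          + (3 * σ ^ 3 - 4 * κ * ν * σ) * x * y - 8 * κ * ρ * y ^ 3
          + (8 * κ * ν * ρ - 2 * ρ * σ ^ 2) * y ^ 2) / (8 * σ * y ^ 2)) * p x y) :
    ∀ x : ℝ, ∀ y : ℝ, 0 < y →
      deriv (fun x' => u x' y) x = deriv (fun y' => σ ^ 2 * y' * ℓY x y' * p x y') y := by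
  intro x y hy
  obtain rfl : p = gaussGammaDensity α β := funext₂ hp
  have hu_cubic : (fun x' => u x' y) = fun x' =>
      (-σ ^ 3 * x' ^ 3 + 2 * ρ * σ ^ 2 * y * x' ^ 2
        + (4 * κ * σ * y ^ 2 + (3 * σ ^ 3 - 4 * κ * ν * σ) * y) * x'
        + (-8 * κ * ρ * y ^ 3 + (8 * κ * ν * ρ - 2 * ρ * σ ^ 2) * y ^ 2)) / (8 * σ * y ^ 2)
        * gaussGammaDensity α β x' y := by
    funext x'
    rw [hu]
    ring
  simp only [hu_cubic, hℓY]
  rw [((hasDerivAt_cubic _ _ _ _ x).div_const _).mul_gaussGammaDensity_fst α β y |>.deriv,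
    (hasDerivAt_diffusion_mul_ellY hσ.ne' ρ x hy.ne').mul_gaussGammaDensity_snd α β x hy.ne'
      |>.deriv]
  subst hα hβ
  field_simp
  ring

/-- In the stochastic volatility model, the explicit function `u`
satisfies the divergence equation `∂u/∂x (x, y) = ∂/∂y ( σ² y ℓ_Y(x, y) p(x, y) )`
for every `x ∈ ℝ` and `y > 0`. -/
theorem stochastic_volatility_divergence_equation
    (κ ν σ : ℝ) (hκ : 0 < κ) (hν : 0 < ν) (hσ : 0 < σ)
    (hFeller : σ ^ 2 < 2 * κ * ν)
    (ρ : ℝ) (hρ : ρ ∈ Set.Ioo (-1 : ℝ) 1)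
    (α β : ℝ) (hα : α = 2 * κ * ν / σ ^ 2) (hβ : β = 2 * κ / σ ^ 2)
    (p : ℝ → ℝ → ℝ)
    (hp : ∀ x y : ℝ, p x y =
      (2 * Real.pi * y) ^ (-(1 : ℝ) / 2) * Real.exp (-(x ^ 2) / (2 * y)) *
        (β ^ α / Real.Gamma α) * y ^ (α - 1) * Real.exp (-β * y))
    (ℓY : ℝ → ℝ → ℝ)
    (hℓY : ∀ x y : ℝ, ℓY x y = x ^ 2 / (4 * y ^ 2) - 1 / (4 * y) - ρ * x / (2 * σ * y))
    (u : ℝ → ℝ → ℝ)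
    (hu : ∀ x y : ℝ, u x y =
      ((-σ ^ 3 * x ^ 3 + 2 * ρ * σ ^ 2 * x ^ 2 * y + 4 * κ * σ * x * y ^ 2
          + (3 * σ ^ 3 - 4 * κ * ν * σ) * x * y - 8 * κ * ρ * y ^ 3
          + (8 * κ * ν * ρ - 2 * ρ * σ ^ 2) * y ^ 2) / (8 * σ * y ^ 2)) * p x y) :
    ∀ x : ℝ, ∀ y : ℝ, 0 < y →
      deriv (fun x' => u x' y) x = deriv (fun y' => σ ^ 2 * y' * ℓY x y' * p x y') y :=
  stochastic_volatility_divergence_equation_general κ ν σ hσ ρ α β hα hβ p hp ℓY hℓY u hu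
end
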